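/- arXiv:2510.04253 — 7 statements merged into one kernel-verified Lean document; each statement's English description precedes it below -/
import Mathlib

section
/- For the Gibbs state ρ_G = e^{-βH_i}/Z_i with H_i = Σ_i E_i A_i, and for projective final measurement B_f with final energies E'_f, the Jarzynski equality holds for the operational quasiprobability: Σ_{i,f} q^OQ_{if} e^{-β(E'_f - E_i)} = Z_f/Z_i, where Z_i = Σ_i (rank A_i) e^{-βE_i} and Z_f = Σ_f (rank B_f) e^{-βE'_f}. -/
/-!
The `A i` form a complete family of orthogonal idempotents, so `c ↦ ∑ i, c i • A i` is a
continuous algebra homomorphism out of `Fin d → ℂ`; it therefore commutes with `exp`, which gives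
`ρ_G = ∑ i, Z_i⁻¹ e^{-βE_i} A_i`. In particular `ρ_G` commutes with every `A i`, so the dephasing
`∑ i, A i ρ_G A i` returns `ρ_G`, the correction term of `q` vanishes, and
`q i f = Z_i⁻¹ e^{-βE_i} Tr(A_i B_f)`. Summing over `i` with `∑ i, A i = 1` leaves
`Z_i⁻¹ ∑ f, e^{-βE'_f} Tr B_f`, and the trace of an idempotent matrix is its rank.
-/

open Finset Matrix

namespace CompleteOrthogonalIdempotents

variable {ι 𝕜 R : Type*} [Fintype ι] {e : ι → R}

section Algebra

variable [CommSemiring 𝕜] [Semiring R] [Algebra 𝕜 R]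

def piAlgHom (he : CompleteOrthogonalIdempotents e) : (ι → 𝕜) →ₐ[𝕜] R :=
  AlgHom.ofLinearMap (Fintype.linearCombination 𝕜 e)
    (by simp [Fintype.linearCombination_apply, he.complete])
    (fun c c' => by
      classical
      simp [Fintype.linearCombination_apply, sum_mul_sum, he.mul_eq, smul_smul, mul_comm])

theorem piAlgHom_apply (he : CompleteOrthogonalIdempotents e) (c : ι → 𝕜) :
    he.piAlgHom c = ∑ i, c i • e i :=
  Fintype.linearCombination_apply 𝕜 e c

theorem mul_sum_smul (he : CompleteOrthogonalIdempotents e) (c : ι → 𝕜) (i : ι) :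
    e i * ∑ j, c j • e j = c i • e i := by
  classical
  simp [mul_sum, he.mul_eq]

theorem sum_smul_mul (he : CompleteOrthogonalIdempotents e) (c : ι → 𝕜) (i : ι) :
    (∑ j, c j • e j) * e i = c i • e i := by
  classical
  simp [sum_mul, he.mul_eq]

end Algebra

theorem sum_mul_mul_of_commute [Semiring R] (he : CompleteOrthogonalIdempotents e) {x : R}
    (hx : ∀ i, Commute (e i) x) : ∑ i, e i * x * e i = x := by
  simp_rw [mul_assoc, ← (hx _).eq, ← mul_assoc, (he.idem _).eq, ← sum_mul, he.complete, one_mul]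

theorem exp_sum_smul [RCLike 𝕜] [Ring R] [TopologicalSpace R] [IsTopologicalRing R] [T2Space R]
    [Algebra 𝕜 R] [ContinuousSMul 𝕜 R] (he : CompleteOrthogonalIdempotents e) (c : ι → 𝕜) :
    NormedSpace.exp (∑ i, c i • e i) = ∑ i, NormedSpace.exp (c i) • e i := by
  have hφ : Continuous (he.piAlgHom (𝕜 := 𝕜)) := by rw [funext he.piAlgHom_apply]; fun_prop
  have hsum := (NormedSpace.expSeries_summable' (𝕂 := 𝕜) c).hasSum.map he.piAlgHom hφ
  simp_rw [← Pi.coe_exp, ← he.piAlgHom_apply, NormedSpace.exp_eq_tsum 𝕜]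
  simpa [Function.comp_def, map_smul, map_pow] using hsum.tsum_eq

end CompleteOrthogonalIdempotents

theorem Matrix.trace_eq_rank_of_isIdempotentElem {K n : Type*} [Field K] [Fintype n]
    [DecidableEq n] {P : Matrix n n K} (hP : IsIdempotentElem P) : P.trace = P.rank := by
  have hP' : LinearMap.IsProj (LinearMap.range P.toLin') P.toLin' :=
    LinearMap.IsIdempotentElem.isProj_range _ (hP.map toLinAlgEquiv')
  rw [← trace_toLin'_eq, hP'.trace, Matrix.rank]
  rfl

theorem oq_jarzynski_general (d : ℕ) (β : ℝ)
    (A : Fin d → Matrix (Fin d) (Fin d) ℂ)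
    (hAproj : ∀ i, A i * A i = A i)
    (hAorth : ∀ i i', i ≠ i' → A i * A i' = 0)
    (hAsum : ∑ i, A i = 1)
    (B : Fin d → Matrix (Fin d) (Fin d) ℂ)
    (hBproj : ∀ f, B f * B f = B f)
    (E E' : Fin d → ℝ)
    (Hi : Matrix (Fin d) (Fin d) ℂ) (hHi : Hi = ∑ i, (E i : ℂ) • A i)
    (Zi : ℝ)
    (Zf : ℝ) (hZf : Zf = ∑ f, ((B f).rank : ℝ) * Real.exp (-β * E' f))
    (ρG : Matrix (Fin d) (Fin d) ℂ)
    (hρG : ρG = ((Zi : ℂ))⁻¹ • NormedSpace.exp ((-(β : ℂ)) • Hi))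
    (q : Fin d → Fin d → ℂ)
    (hq : ∀ i f, q i f = (A i * ρG * A i * B f).trace +
      (1 / (d : ℂ)) * ((ρG * B f).trace - ∑ i', (A i' * ρG * A i' * B f).trace)) :
    ∑ i, ∑ f, q i f * Complex.exp (-(β : ℂ) * ((E' f : ℂ) - (E i : ℂ))) =
      (Zf : ℂ) / (Zi : ℂ) := by
  have hA : CompleteOrthogonalIdempotents A := ⟨⟨hAproj, fun i j => hAorth i j⟩, hAsum⟩
  set p : Fin d → ℂ := fun i => (Zi : ℂ)⁻¹ * Complex.exp (-β * E i)
  have hρ : ρG = ∑ i, p i • A i := by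
    simp only [hρG, hHi, smul_sum, smul_smul, hA.exp_sum_smul, p, Complex.exp_eq_exp_ℂ]
  have hAρA : ∀ i, A i * ρG * A i = p i • A i := fun i => by
    rw [hρ, hA.mul_sum_smul, smul_mul_assoc, hAproj]
  have hdephase : ∑ i, A i * ρG * A i = ρG := hA.sum_mul_mul_of_commute fun i => by
    rw [hρ]; exact (hA.mul_sum_smul p i).trans (hA.sum_smul_mul p i).symm
  have hq_diag : ∀ i f, q i f = p i * (A i * B f).trace := fun i f => by
    rw [hq, ← trace_sum, ← sum_mul, hdephase, sub_self, mul_zero, add_zero, hAρA, smul_mul_assoc,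
      trace_smul, smul_eq_mul]
  calc ∑ i, ∑ f, q i f * Complex.exp (-β * (E' f - E i))
      = ∑ f, (Zi : ℂ)⁻¹ * Complex.exp (-β * E' f) * ∑ i, (A i * B f).trace := by
        rw [sum_comm]
        refine sum_congr rfl fun f _ => ?_
        rw [mul_sum]
        refine sum_congr rfl fun i _ => ?_
        rw [hq_diag, mul_right_comm, mul_assoc (Zi : ℂ)⁻¹, ← Complex.exp_add]
        ring_nf
    _ = ∑ f, (Zi : ℂ)⁻¹ * Complex.exp (-β * E' f) * (B f).rank := by
        simp_rw [← trace_sum, ← sum_mul, hAsum, one_mul,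
          trace_eq_rank_of_isIdempotentElem (hBproj _)]
    _ = Zf / Zi := by
        rw [hZf, div_eq_inv_mul]
        push_cast
        rw [mul_sum]
        exact sum_congr rfl fun f _ => by ring

/-- Jarzynski equality for the operational quasiprobability with a
Gibbs initial state `ρ_G = e^{-βH_i}/Z_i`. -/
theorem oq_jarzynski (d : ℕ) (hd : 0 < d) (β : ℝ) (hβ : 0 < β)
    (A : Fin d → Matrix (Fin d) (Fin d) ℂ)
    (hAherm : ∀ i, (A i).IsHermitian) (hAproj : ∀ i, A i * A i = A i)
    (hAorth : ∀ i i', i ≠ i' → A i * A i' = 0)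
    (hAsum : ∑ i, A i = 1)
    (B : Fin d → Matrix (Fin d) (Fin d) ℂ)
    (hBherm : ∀ f, (B f).IsHermitian) (hBproj : ∀ f, B f * B f = B f)
    (hBorth : ∀ f f', f ≠ f' → B f * B f' = 0)
    (hBsum : ∑ f, B f = 1)
    (E E' : Fin d → ℝ)
    (Hi : Matrix (Fin d) (Fin d) ℂ) (hHi : Hi = ∑ i, (E i : ℂ) • A i)
    (Zi : ℝ) (hZi : Zi = ∑ i, ((A i).rank : ℝ) * Real.exp (-β * E i))
    (Zf : ℝ) (hZf : Zf = ∑ f, ((B f).rank : ℝ) * Real.exp (-β * E' f))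
    (ρG : Matrix (Fin d) (Fin d) ℂ)
    (hρG : ρG = ((Zi : ℂ))⁻¹ • NormedSpace.exp ((-(β : ℂ)) • Hi))
    (q : Fin d → Fin d → ℂ)
    (hq : ∀ i f, q i f = (A i * ρG * A i * B f).trace +
      (1 / (d : ℂ)) * ((ρG * B f).trace - ∑ i', (A i' * ρG * A i' * B f).trace)) :
    ∑ i, ∑ f, q i f * Complex.exp (-(β : ℂ) * ((E' f : ℂ) - (E i : ℂ))) =
      (Zf : ℂ) / (Zi : ℂ) :=
  oq_jarzynski_general d β A hAproj hAorth hAsum B hBproj E E' Hi hHi Zi Zf hZf ρG hρG q hq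
end

section
/- The difference between the average work of the OQ and that of the TPM scheme equals the trace of the product of the off-diagonal part of the state with the final Hamiltonian: Σ_{i,f}(q^OQ_{if} - p^TPM_{if})(E'_f - E_i) = Tr(ρ_off H_f), where ρ_off = ρ - Σ_i A_i ρ A_i and H_f = Σ_f E'_f B_f. -/
open Matrix ComplexOrder

/-- The OQ−TPM average-work difference equals `Tr(ρ_off H_f)`. -/
theorem oq_tpm_work_difference (d : ℕ) (hd : 0 < d)
    (ρ : Matrix (Fin d) (Fin d) ℂ) (hρ : ρ.PosSemidef) (hρtr : ρ.trace = 1)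
    (A : Fin d → Matrix (Fin d) (Fin d) ℂ)
    (hAherm : ∀ i, (A i).IsHermitian) (hAproj : ∀ i, A i * A i = A i)
    (hAsum : ∑ i, A i = 1)
    (B : Fin d → Matrix (Fin d) (Fin d) ℂ)
    (hBpos : ∀ f, (B f).PosSemidef) (hBsum : ∑ f, B f = 1)
    (E E' : Fin d → ℝ)
    (pTPM : Fin d → Fin d → ℂ)
    (hpTPM : ∀ i f, pTPM i f = (A i * ρ * A i * B f).trace)
    (q : Fin d → Fin d → ℂ)
    (hq : ∀ i f, q i f = pTPM i f +
      (1 / (d : ℂ)) * ((ρ * B f).trace - ∑ i', pTPM i' f))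
    (ρD ρoff Hf : Matrix (Fin d) (Fin d) ℂ)
    (hρD : ρD = ∑ i, A i * ρ * A i) (hρoff : ρoff = ρ - ρD)
    (hHf : Hf = ∑ f, (E' f : ℂ) • B f) :
    ∑ i, ∑ f, (q i f - pTPM i f) * ((E' f : ℂ) - (E i : ℂ)) = (ρoff * Hf).trace := by
  have hd' : (d : ℂ) ≠ 0 := Nat.cast_ne_zero.mpr hd.ne'
  set T : Fin d → ℂ := fun f => (ρ * B f).trace - ∑ i', pTPM i' f with hT
  -- key trace facts
  have hpD : ∀ f, (ρD * B f).trace = ∑ i, pTPM i f := by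
    intro f
    rw [hρD, Finset.sum_mul, Matrix.trace_sum]
    exact Finset.sum_congr rfl fun i _ => (hpTPM i f).symm
  have hTsum : ∑ f, T f = 0 := by
    have h1 : ∑ f, (ρ * B f).trace = 1 := by
      rw [← Matrix.trace_sum, ← Finset.mul_sum, hBsum, mul_one, hρtr]
    have h2 : ∑ f, ∑ i', pTPM i' f = 1 := by
      rw [Finset.sum_comm]
      have : ∀ i : Fin d, ∑ f, pTPM i f = (ρ * A i).trace := by
        intro i
        simp_rw [hpTPM]
        rw [← Matrix.trace_sum, ← Finset.mul_sum, hBsum, mul_one]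
        calc (A i * ρ * A i).trace = (A i * (A i * ρ)).trace := by
              rw [Matrix.trace_mul_comm (A i * ρ) (A i)]
          _ = (ρ * A i).trace := by
              rw [← mul_assoc, hAproj, Matrix.trace_mul_comm]
      simp_rw [this]
      rw [← Matrix.trace_sum, ← Finset.mul_sum, hAsum, mul_one, hρtr]
    simp only [hT, Finset.sum_sub_distrib, h1, h2, sub_self]
  -- LHS
  have hLHS : ∑ i, ∑ f, (q i f - pTPM i f) * ((E' f : ℂ) - (E i : ℂ))
      = ∑ f, (E' f : ℂ) * T f := by
    rw [Finset.sum_comm]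
    have hinner : ∀ f, ∑ i, (q i f - pTPM i f) * ((E' f : ℂ) - (E i : ℂ))
        = (E' f : ℂ) * T f - (1 / (d : ℂ)) * T f * (∑ i, (E i : ℂ)) := by
      intro f
      have : ∀ i : Fin d, (q i f - pTPM i f) * ((E' f : ℂ) - (E i : ℂ))
          = (1 / (d : ℂ)) * T f * (E' f : ℂ) - (1 / (d : ℂ)) * T f * (E i : ℂ) := by
        intro i; rw [hq]; ring
      simp_rw [this]
      rw [Finset.sum_sub_distrib, Finset.sum_const, ← Finset.mul_sum,
        Finset.card_fin, nsmul_eq_mul]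
      have hdc : (d : ℂ) * (1 / (d : ℂ) * T f * (E' f : ℂ)) = (E' f : ℂ) * T f := by
        field_simp
      rw [hdc]
    simp_rw [hinner]
    rw [Finset.sum_sub_distrib]
    have : ∑ f, 1 / (d : ℂ) * T f * (∑ i, (E i : ℂ))
        = (1 / (d : ℂ)) * (∑ f, T f) * (∑ i, (E i : ℂ)) := by
      rw [← Finset.sum_mul, ← Finset.mul_sum]
    rw [this, hTsum, mul_zero, zero_mul, sub_zero]
  rw [hLHS, hρoff, hHf, Finset.mul_sum, Matrix.trace_sum]
  refine Finset.sum_congr rfl fun f _ => ?_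
  rw [Matrix.mul_smul, Matrix.trace_smul, sub_mul, Matrix.trace_sub, hpD]
  simp [hT, mul_sub]
end

section
/- Two binary unbiased qubit POVMs A_± = (1/2)(I ± v·σ) and B_± = (1/2)(I ± w·σ) with ‖v‖, ‖w‖ ≤ 1 are jointly measurable if and only if ‖v + w‖ + ‖v − w‖ ≤ 2 (Busch's criterion). -/
open Matrix ComplexOrder

/-- The Pauli matrices σ_x, σ_y, σ_z. -/
noncomputable def pauli : Fin 3 → Matrix (Fin 2) (Fin 2) ℂ
  | 0 => !![0, 1; 1, 0]
  | 1 => !![0, -Complex.I; Complex.I, 0]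
  | 2 => !![1, 0; 0, -1]

/-- `v · σ` for a real vector `v ∈ ℝ³`. -/
noncomputable def blochOp (v : Fin 3 → ℝ) : Matrix (Fin 2) (Fin 2) ℂ :=
  ∑ k, (v k : ℂ) • pauli k

/-- Euclidean inner product on ℝ³. -/
def dot3 (v w : Fin 3 → ℝ) : ℝ := ∑ k, v k * w k

/-- Euclidean norm on ℝ³. -/
noncomputable def norm3 (v : Fin 3 → ℝ) : ℝ := Real.sqrt (dot3 v v)

/-!
A Hermitian 2×2 matrix `a • 1 + m·σ` has trace `2a` and determinant `a² - ‖m‖²`, so it is positive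
semidefinite iff `‖m‖ ≤ a`. Writing a joint observable as `J i f = a i f • 1 + m i f·σ`, the
marginal conditions force `∑ a i f = 1`, `v + w = 2 (m 0 0 - m 1 1)` and `v - w = 2 (m 0 1 - m 1 0)`,
and the triangle inequality gives Busch's bound. Conversely, with `t = (‖v + w‖ - ‖v - w‖) / 2`,
the operators `J i f = (1 ± t)/4 • 1 + ((±v ± w)/4)·σ` form a joint observable whenever the bound
holds.
-/

open Complex

lemma Matrix.IsHermitian.posSemidef_iff_trace_nonneg_and_det_nonneg {𝕜 : Type*} [RCLike 𝕜]
    {A : Matrix (Fin 2) (Fin 2) 𝕜} (hA : A.IsHermitian) :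
    A.PosSemidef ↔ 0 ≤ A.trace ∧ 0 ≤ A.det := by
  rw [hA.posSemidef_iff_eigenvalues_nonneg, hA.trace_eq_sum_eigenvalues,
    hA.det_eq_prod_eigenvalues, Fin.sum_univ_two, Fin.prod_univ_two, ← RCLike.ofReal_add,
    ← RCLike.ofReal_mul, RCLike.ofReal_nonneg, RCLike.ofReal_nonneg, Pi.le_def,
    Fin.forall_fin_two, Pi.zero_apply, Pi.zero_apply]
  constructor
  · rintro ⟨hx, hy⟩
    exact ⟨add_nonneg hx hy, mul_nonneg hx hy⟩
  · rintro ⟨hsum, hprod⟩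
    rcases mul_nonneg_iff.mp hprod with h | ⟨hx, hy⟩
    · exact h
    · exact ⟨by linarith, by linarith⟩

lemma norm3_eq_norm (v : Fin 3 → ℝ) : norm3 v = ‖WithLp.toLp 2 v‖ := by
  rw [EuclideanSpace.norm_eq, norm3, dot3]
  simp [sq]

lemma norm3_add_le (v w : Fin 3 → ℝ) : norm3 (v + w) ≤ norm3 v + norm3 w := by
  simpa only [norm3_eq_norm, WithLp.toLp_add] using norm_add_le _ _

lemma norm3_sub_le (v w : Fin 3 → ℝ) : norm3 (v - w) ≤ norm3 v + norm3 w := by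
  simpa only [norm3_eq_norm, WithLp.toLp_sub] using norm_sub_le _ _

lemma norm3_smul (c : ℝ) (v : Fin 3 → ℝ) : norm3 (c • v) = |c| * norm3 v := by
  rw [norm3_eq_norm, norm3_eq_norm, WithLp.toLp_smul, norm_smul, Real.norm_eq_abs]

lemma dot3_self (v : Fin 3 → ℝ) : dot3 v v = v 0 ^ 2 + v 1 ^ 2 + v 2 ^ 2 := by
  simp [dot3, Fin.sum_univ_three, sq]

lemma blochOp_add (m n : Fin 3 → ℝ) : blochOp (m + n) = blochOp m + blochOp n := by
  simp [blochOp, add_smul, Finset.sum_add_distrib]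

lemma blochOp_smul (c : ℝ) (m : Fin 3 → ℝ) : blochOp (c • m) = (c : ℂ) • blochOp m := by
  simp only [blochOp, Finset.smul_sum, smul_smul, Pi.smul_apply, smul_eq_mul, ofReal_mul]

noncomputable def blochMatrix (a : ℝ) (m : Fin 3 → ℝ) : Matrix (Fin 2) (Fin 2) ℂ :=
  (a : ℂ) • 1 + blochOp m

lemma blochMatrix_eq (a : ℝ) (m : Fin 3 → ℝ) :
    blochMatrix a m = !![(a : ℂ) + m 2, m 0 - m 1 * I; m 0 + m 1 * I, a - m 2] := by
  ext i j
  fin_cases i <;> fin_cases j <;>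
    simp [blochMatrix, blochOp, pauli, Fin.sum_univ_three] <;> ring

lemma blochMatrix_add (a b : ℝ) (m n : Fin 3 → ℝ) :
    blochMatrix a m + blochMatrix b n = blochMatrix (a + b) (m + n) := by
  simp only [blochMatrix, blochOp_add, ofReal_add, add_smul]
  abel

lemma blochMatrix_inj {a b : ℝ} {m n : Fin 3 → ℝ} :
    blochMatrix a m = blochMatrix b n ↔ a = b ∧ m = n := by
  refine ⟨fun h ↦ ?_, fun ⟨ha, hm⟩ ↦ ha ▸ hm ▸ rfl⟩
  rw [blochMatrix_eq, blochMatrix_eq] at h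
  have h00 : a + m 2 = b + n 2 := by simpa using congrArg re (congrFun₂ h 0 0)
  have h11 : a - m 2 = b - n 2 := by simpa using congrArg re (congrFun₂ h 1 1)
  have h0 : m 0 = n 0 := by simpa using congrArg re (congrFun₂ h 0 1)
  have h1 : m 1 = n 1 := by simpa using congrArg im (congrFun₂ h 0 1)
  refine ⟨by linarith, funext fun k ↦ ?_⟩
  fin_cases k
  exacts [h0, h1, show m 2 = n 2 by linarith]

lemma isHermitian_blochMatrix (a : ℝ) (m : Fin 3 → ℝ) : (blochMatrix a m).IsHermitian := by
  ext i j
  fin_cases i <;> fin_cases j <;> simp [blochMatrix_eq, Complex.ext_iff]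

lemma trace_blochMatrix (a : ℝ) (m : Fin 3 → ℝ) : (blochMatrix a m).trace = 2 * a := by
  rw [blochMatrix_eq, Matrix.trace_fin_two_of]
  ring

lemma det_blochMatrix (a : ℝ) (m : Fin 3 → ℝ) :
    (blochMatrix a m).det = (a ^ 2 - dot3 m m : ℝ) := by
  rw [blochMatrix_eq, Matrix.det_fin_two_of, dot3_self]
  push_cast
  linear_combination (m 1 : ℂ) ^ 2 * I_sq

lemma posSemidef_blochMatrix_iff {a : ℝ} {m : Fin 3 → ℝ} :
    (blochMatrix a m).PosSemidef ↔ norm3 m ≤ a := by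
  rw [(isHermitian_blochMatrix a m).posSemidef_iff_trace_nonneg_and_det_nonneg,
    trace_blochMatrix, det_blochMatrix, norm3, Real.sqrt_le_iff]
  norm_cast
  constructor <;> rintro ⟨h₁, h₂⟩ <;> exact ⟨by linarith, by linarith⟩

lemma Matrix.IsHermitian.exists_eq_blochMatrix {P : Matrix (Fin 2) (Fin 2) ℂ}
    (hP : P.IsHermitian) : ∃ a m, P = blochMatrix a m := by
  refine ⟨((P 0 0).re + (P 1 1).re) / 2,
    ![(P 0 1).re, -(P 0 1).im, ((P 0 0).re - (P 1 1).re) / 2], ?_⟩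
  have h10 : P 1 0 = star (P 0 1) := by simpa using (hP.apply 1 0).symm
  rw [blochMatrix_eq, Matrix.eta_fin_two P, ← hP.coe_re_apply_self 0, ← hP.coe_re_apply_self 1,
    h10]
  ext i j
  fin_cases i <;> fin_cases j <;> simp [Complex.ext_iff] <;> ring

lemma Matrix.PosSemidef.exists_eq_blochMatrix {P : Matrix (Fin 2) (Fin 2) ℂ}
    (hP : P.PosSemidef) : ∃ a m, norm3 m ≤ a ∧ P = blochMatrix a m := by
  obtain ⟨a, m, rfl⟩ := hP.isHermitian.exists_eq_blochMatrix
  exact ⟨a, m, posSemidef_blochMatrix_iff.mp hP, rfl⟩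

def JointlyMeasurable {ι κ n 𝕜 : Type*} [Fintype ι] [Fintype κ] [Fintype n] [RCLike 𝕜]
    (A : ι → Matrix n n 𝕜) (B : κ → Matrix n n 𝕜) : Prop :=
  ∃ J : ι → κ → Matrix n n 𝕜,
    (∀ i f, (J i f).PosSemidef) ∧ (∀ i, ∑ f, J i f = A i) ∧ (∀ f, ∑ i, J i f = B f)

noncomputable def unbiasedPOVM (v : Fin 3 → ℝ) (x : Fin 2) : Matrix (Fin 2) (Fin 2) ℂ :=
  (1 / 2 : ℂ) • (1 + (-1 : ℂ) ^ (x : ℕ) • blochOp v)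

lemma unbiasedPOVM_zero (v : Fin 3 → ℝ) :
    unbiasedPOVM v 0 = blochMatrix (1 / 2) ((1 / 2 : ℝ) • v) := by
  rw [unbiasedPOVM, blochMatrix, blochOp_smul, Fin.val_zero, pow_zero]
  push_cast
  module

lemma unbiasedPOVM_one (v : Fin 3 → ℝ) :
    unbiasedPOVM v 1 = blochMatrix (1 / 2) ((-1 / 2 : ℝ) • v) := by
  rw [unbiasedPOVM, blochMatrix, blochOp_smul, Fin.val_one, pow_one]
  push_cast
  module

theorem JointlyMeasurable.norm3_add_add_norm3_sub_le {v w : Fin 3 → ℝ}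
    (h : JointlyMeasurable (unbiasedPOVM v) (unbiasedPOVM w)) :
    norm3 (v + w) + norm3 (v - w) ≤ 2 := by
  obtain ⟨J, hJ, hrow, hcol⟩ := h
  choose a m hm hJm using fun i f ↦ (hJ i f).exists_eq_blochMatrix
  have hrow' (i : Fin 2) : blochMatrix (a i 0 + a i 1) (m i 0 + m i 1) = unbiasedPOVM v i := by
    rw [← hrow i, Fin.sum_univ_two, hJm, hJm, blochMatrix_add]
  have hcol' (f : Fin 2) : blochMatrix (a 0 f + a 1 f) (m 0 f + m 1 f) = unbiasedPOVM w f := by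
    rw [← hcol f, Fin.sum_univ_two, hJm, hJm, blochMatrix_add]
  obtain ⟨ha0, hv0⟩ := blochMatrix_inj.mp ((hrow' 0).trans (unbiasedPOVM_zero v))
  obtain ⟨ha1, hv1⟩ := blochMatrix_inj.mp ((hrow' 1).trans (unbiasedPOVM_one v))
  obtain ⟨-, hw0⟩ := blochMatrix_inj.mp ((hcol' 0).trans (unbiasedPOVM_zero w))
  obtain ⟨-, hw1⟩ := blochMatrix_inj.mp ((hcol' 1).trans (unbiasedPOVM_one w))
  have hadd : v + w = (2 : ℝ) • (m 0 0 - m 1 1) := by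
    linear_combination (norm := module) hv1 - hv0 + hw1 - hw0
  have hsub : v - w = (2 : ℝ) • (m 0 1 - m 1 0) := by
    linear_combination (norm := module) hv1 - hv0 + hw0 - hw1
  calc norm3 (v + w) + norm3 (v - w)
      = 2 * norm3 (m 0 0 - m 1 1) + 2 * norm3 (m 0 1 - m 1 0) := by
        rw [hadd, hsub, norm3_smul, norm3_smul, abs_two]
    _ ≤ 2 * (norm3 (m 0 0) + norm3 (m 1 1)) + 2 * (norm3 (m 0 1) + norm3 (m 1 0)) := by
        gcongr <;> exact norm3_sub_le _ _
    _ ≤ 2 := by linarith [hm 0 0, hm 0 1, hm 1 0, hm 1 1]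

theorem jointlyMeasurable_unbiasedPOVM {v w : Fin 3 → ℝ}
    (h : norm3 (v + w) + norm3 (v - w) ≤ 2) :
    JointlyMeasurable (unbiasedPOVM v) (unbiasedPOVM w) := by
  -- Splitting the unit weight as (1 ± t)/2 between the pairs of outcomes with equal and unequal
  -- signs turns the criterion into the two Bloch-ball conditions ‖v + w‖ ≤ 1 + t, ‖v - w‖ ≤ 1 - t.
  set t := (norm3 (v + w) - norm3 (v - w)) / 2 with ht
  refine ⟨![![blochMatrix ((1 + t) / 4) ((1 / 4 : ℝ) • (v + w)),
      blochMatrix ((1 - t) / 4) ((1 / 4 : ℝ) • (v - w))],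
    ![blochMatrix ((1 - t) / 4) ((-1 / 4 : ℝ) • (v - w)),
      blochMatrix ((1 + t) / 4) ((-1 / 4 : ℝ) • (v + w))]], ?_, ?_, ?_⟩
  · have hsum : norm3 (v + w) ≤ 1 + t := by rw [ht]; linarith
    have hdiff : norm3 (v - w) ≤ 1 - t := by rw [ht]; linarith
    simp only [Fin.forall_fin_two, Matrix.cons_val_zero, Matrix.cons_val_one,
      posSemidef_blochMatrix_iff, norm3_smul]
    norm_num
    exact ⟨⟨by linarith, by linarith⟩, by linarith, by linarith⟩
  all_goals
    simp only [Fin.forall_fin_two, Fin.sum_univ_two, Matrix.cons_val_zero, Matrix.cons_val_one,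
      blochMatrix_add, unbiasedPOVM_zero, unbiasedPOVM_one, blochMatrix_inj]
    exact ⟨⟨by ring, by module⟩, by ring, by module⟩

theorem busch_joint_measurability_general (v w : Fin 3 → ℝ)
    (A B : Fin 2 → Matrix (Fin 2) (Fin 2) ℂ)
    (hA : ∀ x : Fin 2, A x = (1 / 2 : ℂ) • (1 + ((-1 : ℂ)) ^ (x : ℕ) • blochOp v))
    (hB : ∀ x : Fin 2, B x = (1 / 2 : ℂ) • (1 + ((-1 : ℂ)) ^ (x : ℕ) • blochOp w)) :
    (∃ J : Fin 2 → Fin 2 → Matrix (Fin 2) (Fin 2) ℂ,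
        (∀ i f, (J i f).PosSemidef) ∧
        (∀ i, ∑ f, J i f = A i) ∧ (∀ f, ∑ i, J i f = B f)) ↔
      norm3 (v + w) + norm3 (v - w) ≤ 2 := by
  obtain rfl : A = unbiasedPOVM v := funext hA
  obtain rfl : B = unbiasedPOVM w := funext hB
  exact ⟨JointlyMeasurable.norm3_add_add_norm3_sub_le, jointlyMeasurable_unbiasedPOVM⟩

/-- Busch's criterion: two binary unbiased qubit POVMs
`A_± = (1/2)(I ± v·σ)`, `B_± = (1/2)(I ± w·σ)` are jointly measurable iff
`‖v + w‖ + ‖v − w‖ ≤ 2`. -/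
theorem busch_joint_measurability (v w : Fin 3 → ℝ)
    (hv : norm3 v ≤ 1) (hw : norm3 w ≤ 1)
    (A B : Fin 2 → Matrix (Fin 2) (Fin 2) ℂ)
    (hA : ∀ x : Fin 2, A x = (1 / 2 : ℂ) • (1 + ((-1 : ℂ)) ^ (x : ℕ) • blochOp v))
    (hB : ∀ x : Fin 2, B x = (1 / 2 : ℂ) • (1 + ((-1 : ℂ)) ^ (x : ℕ) • blochOp w)) :
    (∃ J : Fin 2 → Fin 2 → Matrix (Fin 2) (Fin 2) ℂ,
        (∀ i f, (J i f).PosSemidef) ∧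
        (∀ i, ∑ f, J i f = A i) ∧ (∀ f, ∑ i, J i f = B f)) ↔
      norm3 (v + w) + norm3 (v - w) ≤ 2 :=
  busch_joint_measurability_general v w A B hA hB
end

section
/- The qubit operational quasiprobability q_{x_i x_f} = (1/4)[1 + (−1)^{x_i+x_f} v·w + ((−1)^{x_i} v + (−1)^{x_f} w)·r] is nonnegative for all four outcome pairs and all Bloch vectors r with ‖r‖ ≤ 1 if and only if 1 + v·w − ‖v + w‖ ≥ 0 and 1 − v·w − ‖v − w‖ ≥ 0. -/
lemma dot3_self_nonneg (u : Fin 3 → ℝ) : 0 ≤ dot3 u u :=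
  Finset.sum_nonneg fun k _ => mul_self_nonneg _

lemma norm3_nonneg (u : Fin 3 → ℝ) : 0 ≤ norm3 u := Real.sqrt_nonneg _

lemma cauchy3 (u r : Fin 3 → ℝ) : |dot3 u r| ≤ norm3 u * norm3 r := by
  have h : (dot3 u r) ^ 2 ≤ dot3 u u * dot3 r r := by
    simp only [dot3, Fin.sum_univ_three]
    nlinarith [sq_nonneg (u 0 * r 1 - u 1 * r 0), sq_nonneg (u 0 * r 2 - u 2 * r 0),
      sq_nonneg (u 1 * r 2 - u 2 * r 1)]
  have h2 := Real.sqrt_le_sqrt h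
  rw [Real.sqrt_sq_eq_abs, Real.sqrt_mul (dot3_self_nonneg u)] at h2
  simpa [norm3] using h2

lemma dot3_smul_add (a b : ℝ) (v w r : Fin 3 → ℝ) :
    dot3 (a • v + b • w) r = a * dot3 v r + b * dot3 w r := by
  simp [dot3, Finset.mul_sum, add_mul, mul_assoc, Finset.sum_add_distrib]

lemma dot3_add (v w r : Fin 3 → ℝ) : dot3 (v + w) r = dot3 v r + dot3 w r := by
  simpa using dot3_smul_add 1 1 v w r

lemma dot3_sub (v w r : Fin 3 → ℝ) : dot3 (v - w) r = dot3 v r - dot3 w r := by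
  have := dot3_smul_add 1 (-1) v w r
  simpa [sub_eq_add_neg] using this

lemma key3 (u : Fin 3 → ℝ) (c : ℝ)
    (H : ∀ r : Fin 3 → ℝ, norm3 r ≤ 1 → 0 ≤ c + dot3 u r) : norm3 u ≤ c := by
  by_cases hu : dot3 u u = 0
  · have h0 : norm3 u = 0 := by simp [norm3, hu]
    have := H 0 (by simp [norm3, dot3])
    simp [dot3] at this
    linarith
  · have hpos : 0 < dot3 u u := lt_of_le_of_ne (dot3_self_nonneg u) (Ne.symm hu)
    have hn : 0 < norm3 u := Real.sqrt_pos.2 hpos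
    have hnsq : norm3 u * norm3 u = dot3 u u := Real.mul_self_sqrt (dot3_self_nonneg u)
    set r : Fin 3 → ℝ := -((norm3 u)⁻¹ • u) with hr
    have hdur : dot3 u r = -(norm3 u) := by
      have : dot3 u r = -((norm3 u)⁻¹ * dot3 u u) := by
        simp only [hr, dot3, Fin.sum_univ_three, Pi.neg_apply, Pi.smul_apply, smul_eq_mul]
        ring
      rw [this, ← hnsq]
      field_simp
    have hrr : dot3 r r = 1 := by
      have : dot3 r r = (norm3 u)⁻¹ * (norm3 u)⁻¹ * dot3 u u := by
        simp only [hr, dot3, Fin.sum_univ_three, Pi.neg_apply, Pi.smul_apply, smul_eq_mul]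
        ring
      rw [this, ← hnsq]
      field_simp
    have hnr : norm3 r ≤ 1 := by simp [norm3, hrr]
    have := H r hnr
    rw [hdur] at this
    linarith

/-- The qubit OQ is nonnegative for all states iff
`1 + v·w − ‖v+w‖ ≥ 0` and `1 − v·w − ‖v−w‖ ≥ 0`. -/
theorem oq_qubit_nonneg_iff (v w : Fin 3 → ℝ) (hv : norm3 v ≤ 1) (hw : norm3 w ≤ 1) :
    (∀ r : Fin 3 → ℝ, norm3 r ≤ 1 → ∀ xi xf : Fin 2,
        0 ≤ ((1 : ℝ) + (-1 : ℝ) ^ ((xi : ℕ) + (xf : ℕ)) * dot3 v w +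
          dot3 ((-1 : ℝ) ^ (xi : ℕ) • v + (-1 : ℝ) ^ (xf : ℕ) • w) r) / 4) ↔
      (0 ≤ 1 + dot3 v w - norm3 (v + w) ∧ 0 ≤ 1 - dot3 v w - norm3 (v - w)) := by
  constructor
  · intro H
    constructor
    · have h1 : ∀ r : Fin 3 → ℝ, norm3 r ≤ 1 → 0 ≤ (1 + dot3 v w) + dot3 (v + w) r := by
        intro r hr
        have h := H r hr 0 0
        simp only [Fin.val_zero, add_zero, pow_zero, one_mul, one_smul] at h
        linarith
      have := key3 (v + w) (1 + dot3 v w) h1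
      linarith
    · have h2 : ∀ r : Fin 3 → ℝ, norm3 r ≤ 1 → 0 ≤ (1 - dot3 v w) + dot3 (v - w) r := by
        intro r hr
        have h := H r hr 0 1
        simp only [Fin.val_zero, Fin.val_one, zero_add, pow_zero, pow_one, one_mul, one_smul,
          neg_one_smul, neg_mul, ← sub_eq_add_neg] at h
        linarith
      have := key3 (v - w) (1 - dot3 v w) h2
      linarith
  · rintro ⟨h1, h2⟩ r hr xi xf
    have c1 := abs_le.1 (cauchy3 (v + w) r)
    have c2 := abs_le.1 (cauchy3 (v - w) r)
    have ea := dot3_add v w r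
    have es := dot3_sub v w r
    have n1 := norm3_nonneg (v + w)
    have n2 := norm3_nonneg (v - w)
    have nr := norm3_nonneg r
    have e3 : dot3 (-v + w) r = -(dot3 (v - w) r) := by
      simp only [dot3, Fin.sum_univ_three, Pi.neg_apply, Pi.add_apply, Pi.sub_apply]; ring
    have e4 : dot3 (-v + -w) r = -(dot3 (v + w) r) := by
      simp only [dot3, Fin.sum_univ_three, Pi.neg_apply, Pi.add_apply]; ring
    have e5 : dot3 (v + -w) r = dot3 (v - w) r := by
      simp only [dot3, Fin.sum_univ_three, Pi.neg_apply, Pi.add_apply, Pi.sub_apply]; ring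
    fin_cases xi <;> fin_cases xf <;>
      simp only [Fin.val_zero, Fin.val_one, add_zero, zero_add, pow_zero, pow_one, one_mul,
        neg_mul, one_smul, neg_one_smul] <;>
      norm_num <;>
      nlinarith [c1.1, c1.2, c2.1, c2.2, e3, e4, e5, h1, h2, n1, n2, nr, hr]
end

section
/- For vectors v, w ∈ R^3 with ‖v‖, ‖w‖ ≤ 1, the conditions (1 + v·w ≥ ‖v + w‖ and 1 − v·w ≥ ‖v − w‖) hold if and only if ‖v + w‖ + ‖v − w‖ ≤ 2. -/
lemma dot3_expand (u u' : Fin 3 → ℝ) :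
    dot3 u u' = u 0 * u' 0 + u 1 * u' 1 + u 2 * u' 2 := by
  simp [dot3, Fin.sum_univ_three]

lemma norm3_sq (u : Fin 3 → ℝ) : norm3 u ^ 2 = dot3 u u :=
  Real.sq_sqrt (dot3_self_nonneg u)

/-- For `‖v‖, ‖w‖ ≤ 1`, the positivity conditions
`1 + v·w ≥ ‖v+w‖` and `1 − v·w ≥ ‖v−w‖` hold iff `‖v+w‖ + ‖v−w‖ ≤ 2`. -/
theorem positivity_iff_busch (v w : Fin 3 → ℝ) (hv : norm3 v ≤ 1) (hw : norm3 w ≤ 1) :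
    (norm3 (v + w) ≤ 1 + dot3 v w ∧ norm3 (v - w) ≤ 1 - dot3 v w) ↔
      norm3 (v + w) + norm3 (v - w) ≤ 2 := by
  set a := norm3 (v + w) with ha
  set b := norm3 (v - w) with hb
  set p := norm3 v with hp
  set q := norm3 w with hq
  set d := dot3 v w with hdd
  have ha0 : 0 ≤ a := norm3_nonneg _
  have hb0 : 0 ≤ b := norm3_nonneg _
  have hp0 : 0 ≤ p := norm3_nonneg _
  have hq0 : 0 ≤ q := norm3_nonneg _
  have hp2 : p ^ 2 = dot3 v v := norm3_sq v
  have hq2 : q ^ 2 = dot3 w w := norm3_sq w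
  have ha2 : a ^ 2 = p ^ 2 + q ^ 2 + 2 * d := by
    rw [ha, norm3_sq, hp2, hq2, hdd, dot3_expand, dot3_expand, dot3_expand, dot3_expand]
    simp [Pi.add_apply]; ring
  have hb2 : b ^ 2 = p ^ 2 + q ^ 2 - 2 * d := by
    rw [hb, norm3_sq, hp2, hq2, hdd, dot3_expand, dot3_expand, dot3_expand, dot3_expand]
    simp [Pi.sub_apply]; ring
  have hcs : d ^ 2 ≤ p ^ 2 * q ^ 2 := by
    rw [hp2, hq2, hdd, dot3_expand, dot3_expand, dot3_expand]
    nlinarith [sq_nonneg (v 0 * w 1 - v 1 * w 0), sq_nonneg (v 0 * w 2 - v 2 * w 0),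
      sq_nonneg (v 1 * w 2 - v 2 * w 1)]
  have hdab : |d| ≤ p * q := by
    rw [abs_le]
    constructor <;> nlinarith [mul_nonneg hp0 hq0]
  have hd1 : d ≤ p * q := (abs_le.mp hdab).2
  have hd2 : -(p * q) ≤ d := (abs_le.mp hdab).1
  have ha2' : a ≤ 2 := by nlinarith
  have hb2' : b ≤ 2 := by nlinarith
  constructor
  · rintro ⟨h1, h2⟩; linarith
  · intro h
    constructor
    · nlinarith [mul_nonneg (by linarith : (0:ℝ) ≤ 2 - a - b) (by linarith : (0:ℝ) ≤ 2 - a + b)]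
    · nlinarith [mul_nonneg (by linarith : (0:ℝ) ≤ 2 - b - a) (by linarith : (0:ℝ) ≤ 2 - b + a)]
end

section
/- If the state ρ commutes with every A_i, or every A_i commutes with every B_f, then the operational quasiprobability q^OQ_{if}(ρ) is nonnegative for all i, f (a probability distribution). -/
/-!
Under either commutation hypothesis, cyclicity of the trace and `A i * A i = A i` give
`Tr(A_i ρ A_i B_f) = Tr(ρ A_i B_f)`. Summed over `i` with `∑ A_i = 1`, this makes the
correction term `Tr(ρ B_f) - ∑ Tr(A_i ρ A_i B_f)` vanish, and `Tr(A_i ρ A_i B_f) ≥ 0` because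
`A_i ρ A_i` and `B_f` are positive semidefinite.
-/

open Matrix ComplexOrder

namespace Matrix

variable {n : Type*} [Fintype n]

open scoped MatrixOrder in
theorem PosSemidef.trace_mul_nonneg {𝕜 : Type*} [RCLike 𝕜] {X Y : Matrix n n 𝕜}
    (hX : X.PosSemidef) (hY : Y.PosSemidef) : 0 ≤ (X * Y).trace := by
  classical
  obtain ⟨b, rfl⟩ := CStarAlgebra.nonneg_iff_eq_star_mul_self.mp hX.nonneg
  rw [star_eq_conjTranspose, Matrix.mul_assoc, trace_mul_comm]
  exact (hY.mul_mul_conjTranspose_same b).trace_nonneg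

variable {R : Type*} [CommSemiring R] {P ρ B : Matrix n n R}

theorem trace_idempotent_mul_mul_self_mul_of_commute_left (hP : IsIdempotentElem P)
    (hρP : Commute ρ P) : (P * ρ * P * B).trace = (ρ * P * B).trace := by
  rw [← hρP.eq, Matrix.mul_assoc ρ P P, hP.eq]

theorem trace_idempotent_mul_mul_self_mul_of_commute_right (hP : IsIdempotentElem P)
    (hPB : Commute P B) : (P * ρ * P * B).trace = (ρ * P * B).trace := by
  calc (P * ρ * P * B).trace = (P * ρ * B * P).trace := by
        rw [Matrix.mul_assoc _ P B, hPB.eq, ← Matrix.mul_assoc]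
    _ = (P * (P * ρ * B)).trace := trace_mul_comm _ _
    _ = (ρ * B * P).trace := by
        simp only [← Matrix.mul_assoc, hP.eq]
        rw [Matrix.mul_assoc, trace_mul_comm]
    _ = (ρ * P * B).trace := by rw [Matrix.mul_assoc, ← hPB.eq, ← Matrix.mul_assoc]

theorem sum_trace_mul_mul_eq_of_sum_eq_one [DecidableEq n] {ι : Type*} [Fintype ι]
    {A : ι → Matrix n n R} (hA : ∑ i, A i = 1) (ρ B : Matrix n n R) :
    ∑ i, (ρ * A i * B).trace = (ρ * B).trace := by
  rw [← trace_sum, ← Finset.sum_mul, ← Finset.mul_sum, hA, Matrix.mul_one]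

end Matrix

theorem oq_nonneg_of_commute_general (d : ℕ)
    (ρ : Matrix (Fin d) (Fin d) ℂ) (hρ : ρ.PosSemidef)
    (A : Fin d → Matrix (Fin d) (Fin d) ℂ)
    (hAherm : ∀ i, (A i).IsHermitian) (hAproj : ∀ i, A i * A i = A i)
    (hAsum : ∑ i, A i = 1)
    (B : Fin d → Matrix (Fin d) (Fin d) ℂ)
    (hBpos : ∀ f, (B f).PosSemidef)
    (hcomm : (∀ i, ρ * A i = A i * ρ) ∨ (∀ i f, A i * B f = B f * A i))
    (q : Fin d → Fin d → ℂ)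
    (hq : ∀ i f, q i f = (A i * ρ * A i * B f).trace +
      (1 / (d : ℂ)) * ((ρ * B f).trace - ∑ i', (A i' * ρ * A i' * B f).trace)) :
    ∀ i f, q i f = (ρ * A i * B f).trace ∧ 0 ≤ q i f := by
  have hdephase : ∀ i f, (A i * ρ * A i * B f).trace = (ρ * A i * B f).trace := by
    rcases hcomm with hρA | hAB
    · exact fun i f ↦ trace_idempotent_mul_mul_self_mul_of_commute_left (hAproj i) (hρA i)
    · exact fun i f ↦ trace_idempotent_mul_mul_self_mul_of_commute_right (hAproj i) (hAB i f)
  have hq_eq : ∀ i f, q i f = (ρ * A i * B f).trace := fun i f ↦ by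
    rw [hq, Finset.sum_congr rfl fun i' _ ↦ hdephase i' f,
      sum_trace_mul_mul_eq_of_sum_eq_one hAsum, sub_self, mul_zero, add_zero, hdephase]
  intro i f
  refine ⟨hq_eq i f, ?_⟩
  have hAρA : (A i * ρ * A i).PosSemidef := by
    simpa only [(hAherm i).eq] using hρ.conjTranspose_mul_mul_same (A i)
  rw [hq_eq i f, ← hdephase i f]
  exact hAρA.trace_mul_nonneg (hBpos f)

/-- If `ρ` commutes with every `A_i`, or every `A_i` commutes with
every `B_f`, then `q^OQ_{if} = Tr(ρ A_i B_f) ≥ 0` for all `i, f`. -/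
theorem oq_nonneg_of_commute (d : ℕ) (hd : 0 < d)
    (ρ : Matrix (Fin d) (Fin d) ℂ) (hρ : ρ.PosSemidef) (hρtr : ρ.trace = 1)
    (A : Fin d → Matrix (Fin d) (Fin d) ℂ)
    (hAherm : ∀ i, (A i).IsHermitian) (hAproj : ∀ i, A i * A i = A i)
    (hAsum : ∑ i, A i = 1)
    (B : Fin d → Matrix (Fin d) (Fin d) ℂ)
    (hBpos : ∀ f, (B f).PosSemidef) (hBsum : ∑ f, B f = 1)
    (hcomm : (∀ i, ρ * A i = A i * ρ) ∨ (∀ i f, A i * B f = B f * A i))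
    (q : Fin d → Fin d → ℂ)
    (hq : ∀ i f, q i f = (A i * ρ * A i * B f).trace +
      (1 / (d : ℂ)) * ((ρ * B f).trace - ∑ i', (A i' * ρ * A i' * B f).trace)) :
    ∀ i f, q i f = (ρ * A i * B f).trace ∧ 0 ≤ q i f :=
  oq_nonneg_of_commute_general d ρ hρ A hAherm hAproj hAsum B hBpos hcomm q hq
end

section
/- For projective measurements, the OQ–TPM difference maximized over the final projective measurement recovers the trace-norm distance to the dephased state: max over projective measurements {B_f} of Σ_{i,f} |q^OQ_{if} − p^TPM_{if}| equals ‖ρ − ρ_D‖_tr, where ρ_D = Σ_i A_i ρ A_i. In particular, for any fixed {B_f}, Σ_{i,f} |q^OQ_{if} − p^TPM_{if}| = Σ_f |Tr((ρ − ρ_D) B_f)| ≤ ‖ρ − ρ_D‖_tr, with equality achieved by the eigenbasis of ρ − ρ_D. -/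
/-!
Only `ρ - ρ_D` matters: in `q^OQ - p^TPM` the `p^TPM` terms cancel and what remains is
`(1/d) Tr((ρ - ρ_D) B_f)`, the same for each of the `d` values of `i`. For a Hermitian
`H = U diag(λ) U*` and POVM elements `B_f`, the diagonal entries of `U* B_f U` are nonnegative and
sum over `f` to one, so `∑_f |Tr(H B_f)| ≤ ∑_j |λ_j|`; the eigenprojections of `H` give equality.
-/

open Matrix ComplexOrder

theorem Finset.sum_sum_div_card {ι : Type*} [Fintype ι] (c : ι → ℝ) :
    ∑ _i : ι, ∑ f, c f / Fintype.card ι = ∑ f, c f := by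
  cases isEmpty_or_nonempty ι
  · simp
  · rw [Finset.sum_const, Finset.card_univ, nsmul_eq_mul, ← Finset.sum_div,
      mul_div_cancel₀ _ (by simp)]

theorem IsStarProjection.posSemidef {n R : Type*} [Fintype n] [Ring R] [PartialOrder R]
    [StarRing R] [StarOrderedRing R] {P : Matrix n n R} (hP : IsStarProjection P) :
    P.PosSemidef := by
  have h := posSemidef_conjTranspose_mul_self P
  rwa [← star_eq_conjTranspose, hP.isSelfAdjoint.star_eq, hP.isIdempotentElem.eq] at h

namespace Matrix

variable {n ι : Type*} [Fintype n] [DecidableEq n] [Fintype ι]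

theorem isStarProjection_single_self {R : Type*} [Semiring R] [StarRing R] (f : n) :
    IsStarProjection (single f f (1 : R)) :=
  ⟨by simp [IsIdempotentElem, single_mul_single_same],
    by simp [IsSelfAdjoint, star_eq_conjTranspose, conjTranspose_single]⟩

theorem trace_conjStarAlgAut {R : Type*} [CommRing R] [StarRing R] (u : unitary (Matrix n n R))
    (X : Matrix n n R) : (Unitary.conjStarAlgAut R _ u X).trace = X.trace := by
  rw [Unitary.conjStarAlgAut_apply, trace_mul_comm, ← mul_assoc, Unitary.coe_star_mul_self,
    one_mul]

theorem sum_norm_trace_diagonal_mul_le (l : n → ℝ) (C : ι → Matrix n n ℂ)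
    (hC : ∀ f, (C f).PosSemidef) (hsum : ∑ f, C f = 1) :
    ∑ f, ‖(diagonal (fun j ↦ (l j : ℂ)) * C f).trace‖ ≤ ∑ j, |l j| := by
  have hnorm (f : ι) (j : n) : ‖C f j j‖ = (C f j j).re :=
    (Complex.re_eq_norm.mpr (hC f).diag_nonneg).symm
  have hcol (j : n) : ∑ f, (C f j j).re = 1 := by
    simpa [← Complex.re_sum, ← Matrix.sum_apply] using congrArg (fun M ↦ (M j j).re) hsum
  calc ∑ f, ‖(diagonal (fun j ↦ (l j : ℂ)) * C f).trace‖
      ≤ ∑ f, ∑ j, |l j| * (C f j j).re := by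
        gcongr with f
        simp only [trace, diag_apply, diagonal_mul]
        refine (norm_sum_le _ _).trans_eq (Finset.sum_congr rfl fun j _ ↦ ?_)
        rw [norm_mul, Complex.norm_real, Real.norm_eq_abs, hnorm]
    _ = ∑ j, |l j| := by
        rw [Finset.sum_comm]
        simp [← Finset.mul_sum, hcol]

namespace IsHermitian

open Unitary

variable {H : Matrix n n ℂ} (hH : H.IsHermitian)
include hH

theorem trace_mul_eq_trace_diagonal_mul (B : Matrix n n ℂ) :
    (H * B).trace = (diagonal (fun j ↦ (hH.eigenvalues j : ℂ)) *
      conjStarAlgAut ℂ _ (star hH.eigenvectorUnitary) B).trace := by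
  rw [← trace_conjStarAlgAut (star hH.eigenvectorUnitary), map_mul,
    hH.conjStarAlgAut_star_eigenvectorUnitary]
  rfl

theorem sum_norm_trace_mul_le (B : ι → Matrix n n ℂ) (hB : ∀ f, (B f).PosSemidef)
    (hsum : ∑ f, B f = 1) : ∑ f, ‖(H * B f).trace‖ ≤ ∑ j, |hH.eigenvalues j| := by
  simp only [hH.trace_mul_eq_trace_diagonal_mul]
  refine sum_norm_trace_diagonal_mul_le _ _ (fun f ↦ ?_) (by rw [← map_sum, hsum, map_one])
  simpa [conjStarAlgAut_star_apply, star_eq_conjTranspose] using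
    (hB f).conjTranspose_mul_mul_same (hH.eigenvectorUnitary : Matrix n n ℂ)

theorem exists_isStarProjection_sum_norm_trace_mul_eq :
    ∃ B : n → Matrix n n ℂ, (∀ f, IsStarProjection (B f)) ∧ ∑ f, B f = 1 ∧
      ∑ f, ‖(H * B f).trace‖ = ∑ j, |hH.eigenvalues j| := by
  refine ⟨fun f ↦ conjStarAlgAut ℂ _ hH.eigenvectorUnitary (single f f 1),
    fun f ↦ (isStarProjection_single_self f).map _, by rw [← map_sum, sum_single_one, map_one], ?_⟩
  simp only [hH.trace_mul_eq_trace_diagonal_mul, ← conjStarAlgAut_symm,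
    StarAlgEquiv.symm_apply_apply]
  simp [trace, single_apply]

end IsHermitian

end Matrix

theorem oq_tpm_difference_trace_norm_general (d : ℕ)
    (ρ : Matrix (Fin d) (Fin d) ℂ)
    (A : Fin d → Matrix (Fin d) (Fin d) ℂ)
    (ρD : Matrix (Fin d) (Fin d) ℂ) (hρD : ρD = ∑ i, A i * ρ * A i)
    (hherm : (ρ - ρD).IsHermitian)
    (trNorm : ℝ) (htrNorm : trNorm = ∑ j, |hherm.eigenvalues j|) :
    (∀ B : Fin d → Matrix (Fin d) (Fin d) ℂ,
      (∀ f, (B f).IsHermitian) → (∀ f, B f * B f = B f) → (∑ f, B f = 1) →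
      (∑ i, ∑ f, norm
          (((A i * ρ * A i * B f).trace +
              (1 / (d : ℂ)) * ((ρ * B f).trace -
                ∑ i', (A i' * ρ * A i' * B f).trace)) -
            (A i * ρ * A i * B f).trace) =
        ∑ f, norm (((ρ - ρD) * B f).trace)) ∧
      (∑ f, norm (((ρ - ρD) * B f).trace)) ≤ trNorm) ∧
    (∃ B : Fin d → Matrix (Fin d) (Fin d) ℂ,
      (∀ f, (B f).IsHermitian) ∧ (∀ f, B f * B f = B f) ∧ (∑ f, B f = 1) ∧
      (∑ f, norm (((ρ - ρD) * B f).trace)) = trNorm) := by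
  subst htrNorm
  refine ⟨fun B hB hBB hsum ↦ ⟨?_, hherm.sum_norm_trace_mul_le B
    (fun f ↦ IsStarProjection.posSemidef ⟨hBB f, hB f⟩) hsum⟩, ?_⟩
  · have hdephased (f : Fin d) : (ρ * B f).trace - ∑ i, (A i * ρ * A i * B f).trace =
        ((ρ - ρD) * B f).trace := by
      rw [hρD, sub_mul, trace_sub, Finset.sum_mul, trace_sum]
    simpa [hdephased, div_eq_inv_mul] using
      Finset.sum_sum_div_card fun f ↦ ‖((ρ - ρD) * B f).trace‖
  · obtain ⟨B, hB, hsum, htrace⟩ := hherm.exists_isStarProjection_sum_norm_trace_mul_eq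
    exact ⟨B, fun f ↦ (hB f).isSelfAdjoint, fun f ↦ (hB f).isIdempotentElem, hsum, htrace⟩

/-- For projective measurements, the OQ–TPM difference summed in
absolute value equals `∑_f |Tr((ρ−ρ_D)B_f)| ≤ ‖ρ − ρ_D‖_tr`, and the trace
norm is attained by maximizing over the final projective measurement. -/
theorem oq_tpm_difference_trace_norm (d : ℕ) (hd : 0 < d)
    (ρ : Matrix (Fin d) (Fin d) ℂ) (hρ : ρ.PosSemidef) (hρtr : ρ.trace = 1)
    (A : Fin d → Matrix (Fin d) (Fin d) ℂ)
    (hAherm : ∀ i, (A i).IsHermitian) (hAproj : ∀ i, A i * A i = A i)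
    (hAsum : ∑ i, A i = 1) (hArank : ∀ i, (A i).rank = 1)
    (ρD : Matrix (Fin d) (Fin d) ℂ) (hρD : ρD = ∑ i, A i * ρ * A i)
    (hherm : (ρ - ρD).IsHermitian)
    (trNorm : ℝ) (htrNorm : trNorm = ∑ j, |hherm.eigenvalues j|) :
    (∀ B : Fin d → Matrix (Fin d) (Fin d) ℂ,
      (∀ f, (B f).IsHermitian) → (∀ f, B f * B f = B f) → (∑ f, B f = 1) →
      (∑ i, ∑ f, norm
          (((A i * ρ * A i * B f).trace +
              (1 / (d : ℂ)) * ((ρ * B f).trace -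
                ∑ i', (A i' * ρ * A i' * B f).trace)) -
            (A i * ρ * A i * B f).trace) =
        ∑ f, norm (((ρ - ρD) * B f).trace)) ∧
      (∑ f, norm (((ρ - ρD) * B f).trace)) ≤ trNorm) ∧
    (∃ B : Fin d → Matrix (Fin d) (Fin d) ℂ,
      (∀ f, (B f).IsHermitian) ∧ (∀ f, B f * B f = B f) ∧ (∑ f, B f = 1) ∧
      (∑ f, norm (((ρ - ρD) * B f).trace)) = trNorm) :=
  oq_tpm_difference_trace_norm_general d ρ A ρD hρD hherm trNorm htrNorm
end
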